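/- arXiv:2212.11227 — 4 statements merged into one kernel-verified Lean document; each statement's English description precedes it below -/
import Mathlib

section
/- Let a < b be real numbers and let u : [a, b] → ℝ be twice continuously differentiable on [a, b]. Then for every x ∈ (a, b), |u′(x)| ≤ ∫_a^b |u″(t)| dt + (18/(b−a)²) ∫_a^b |u(t)| dt. -/
/-!
Pick points `α` and `β` in the outer thirds of `[a, b]` at which `|u|` equals its mean over that
third, so `|u α|, |u β| ≤ (3 / (b - a)) ∫ |u|`. As `β - α ≥ (b - a) / 3`, the mean value theorem
gives `ξ` with `|u' ξ| ≤ (18 / (b - a)²) ∫ |u|`, and `|u' x - u' ξ| ≤ ∫ |u''|` by the fundamental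
theorem of calculus.
-/

open MeasureTheory Set

theorem exists_mem_Ioo_mul_eq_integral {f : ℝ → ℝ} {c d : ℝ} (hcd : c < d)
    (hf : ContinuousOn f (Icc c d)) : ∃ α ∈ Ioo c d, (d - c) * f α = ∫ t in c..d, f t := by
  obtain ⟨α, hα, hmean⟩ := exists_eq_interval_average hcd.ne (by rwa [uIcc_of_le hcd.le])
  refine ⟨α, by rwa [uIoo_of_le hcd.le] at hα, ?_⟩
  rw [hmean, interval_average_eq_div, mul_div_cancel₀ _ (sub_ne_zero.2 hcd.ne')]

theorem integral_abs_le_setIntegral_abs_Ioo {g : ℝ → ℝ} {a b c d : ℝ}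
    (hg : IntegrableOn g (Icc a b)) (hcd : c ≤ d) (hsub : Icc c d ⊆ Icc a b) :
    ∫ t in c..d, |g t| ≤ ∫ t in Ioo a b, |g t| := by
  rw [intervalIntegral.integral_of_le hcd, ← integral_Icc_eq_integral_Ioo]
  exact setIntegral_mono_set hg.abs (Filter.Eventually.of_forall fun t => abs_nonneg _)
    (Ioc_subset_Icc_self.trans hsub).eventuallyLE

theorem exists_abs_deriv_le_integral_abs {u u' : ℝ → ℝ} {a b : ℝ} (hab : a < b)
    (hu : ContinuousOn u (Icc a b)) (hderiv : ∀ x ∈ Ioo a b, HasDerivAt u (u' x) x) :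
    ∃ ξ ∈ Ioo a b, |u' ξ| ≤ 18 / (b - a) ^ 2 * ∫ t in Ioo a b, |u t| := by
  set I := ∫ t in Ioo a b, |u t|
  have hL : 0 < b - a := sub_pos.2 hab
  have hint : IntegrableOn u (Icc a b) := hu.integrableOn_Icc
  obtain ⟨α, hα, hα_mean⟩ := exists_mem_Ioo_mul_eq_integral (c := a) (d := a + (b - a) / 3)
    (by linarith) (hu.abs.mono (Icc_subset_Icc le_rfl (by linarith)))
  obtain ⟨β, hβ, hβ_mean⟩ := exists_mem_Ioo_mul_eq_integral (c := b - (b - a) / 3) (d := b)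
    (by linarith) (hu.abs.mono (Icc_subset_Icc (by linarith) le_rfl))
  have hα_le : (b - a) / 3 * |u α| ≤ I :=
    calc (b - a) / 3 * |u α| = ∫ t in a..a + (b - a) / 3, |u t| := by
          rw [← hα_mean, add_sub_cancel_left]
      _ ≤ I := integral_abs_le_setIntegral_abs_Ioo hint (by linarith)
          (Icc_subset_Icc le_rfl (by linarith))
  have hβ_le : (b - a) / 3 * |u β| ≤ I :=
    calc (b - a) / 3 * |u β| = ∫ t in b - (b - a) / 3..b, |u t| := by
          rw [← hβ_mean, sub_sub_cancel]
      _ ≤ I := integral_abs_le_setIntegral_abs_Ioo hint (by linarith)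
          (Icc_subset_Icc (by linarith) le_rfl)
  have hgap : (b - a) / 3 ≤ β - α := by linarith [hα.2, hβ.1]
  have hαβ : α < β := by linarith
  obtain ⟨ξ, hξ, hslope⟩ := exists_hasDerivAt_eq_slope u u' hαβ
    (hu.mono (Icc_subset_Icc hα.1.le hβ.2.le))
    (fun y hy => hderiv y ⟨hα.1.trans hy.1, hy.2.trans hβ.2⟩)
  refine ⟨ξ, ⟨hα.1.trans hξ.1, hξ.2.trans hβ.2⟩, ?_⟩
  calc |u' ξ| = |u β - u α| / (β - α) := by
        rw [hslope, abs_div, abs_of_pos (sub_pos.2 hαβ)]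
    _ ≤ (|u β| + |u α|) / ((b - a) / 3) := div_le_div₀ (by positivity) (abs_sub _ _)
        (by positivity) hgap
    _ ≤ 2 * I / ((b - a) / 3) / ((b - a) / 3) := by
        gcongr
        rw [le_div_iff₀ (by positivity)]
        linarith
    _ = 18 / (b - a) ^ 2 * I := by field_simp; ring

theorem abs_sub_le_setIntegral_abs_deriv {f f' : ℝ → ℝ} {a b c d : ℝ}
    (hf : ContinuousOn f (Icc a b)) (hderiv : ∀ x ∈ Ioo a b, HasDerivAt f (f' x) x)
    (hf' : IntegrableOn f' (Icc a b)) (hc : c ∈ Icc a b) (hd : d ∈ Icc a b) :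
    |f d - f c| ≤ ∫ t in Ioo a b, |f' t| := by
  wlog hcd : c ≤ d generalizing c d
  · rw [abs_sub_comm]
    exact this hd hc (le_of_not_ge hcd)
  have hsub : Icc c d ⊆ Icc a b := Icc_subset_Icc hc.1 hd.2
  have hftc := intervalIntegral.integral_eq_sub_of_hasDerivAt_of_le hcd (hf.mono hsub)
    (fun x hx => hderiv x ⟨hc.1.trans_lt hx.1, hx.2.trans_le hd.2⟩)
    (hf'.mono_set (by rwa [uIcc_of_le hcd])).intervalIntegrable
  calc |f d - f c| = |∫ t in c..d, f' t| := by rw [hftc]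
    _ ≤ ∫ t in c..d, |f' t| := intervalIntegral.abs_integral_le_integral_abs hcd
    _ ≤ ∫ t in Ioo a b, |f' t| := integral_abs_le_setIntegral_abs_Ioo hf' hcd hsub

theorem deriv_pointwise_bound_general (a b : ℝ) (u u' u'' : ℝ → ℝ)
    (hu' : ∀ x ∈ Set.Icc a b, HasDerivWithinAt u (u' x) (Set.Icc a b) x)
    (hu'' : ∀ x ∈ Set.Icc a b, HasDerivWithinAt u' (u'' x) (Set.Icc a b) x)
    (hcont : ContinuousOn u'' (Set.Icc a b)) :
    ∀ x ∈ Set.Ioo a b,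
      |u' x| ≤ (∫ t in Set.Ioo a b, |u'' t|) +
        18 / (b - a) ^ 2 * ∫ t in Set.Ioo a b, |u t| := by
  intro x hx
  have hasDerivAt_of_Icc : ∀ {g g' : ℝ → ℝ},
      (∀ y ∈ Icc a b, HasDerivWithinAt g (g' y) (Icc a b) y) →
        ∀ y ∈ Ioo a b, HasDerivAt g (g' y) y :=
    fun hg y hy => (hg y (Ioo_subset_Icc_self hy)).hasDerivAt (Icc_mem_nhds hy.1 hy.2)
  obtain ⟨ξ, hξ, hξ_le⟩ := exists_abs_deriv_le_integral_abs (hx.1.trans hx.2)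
    (fun y hy => (hu' y hy).continuousWithinAt) (hasDerivAt_of_Icc hu')
  have hvar := abs_sub_le_setIntegral_abs_deriv (fun y hy => (hu'' y hy).continuousWithinAt)
    (hasDerivAt_of_Icc hu'') hcont.integrableOn_Icc (Ioo_subset_Icc_self hξ)
    (Ioo_subset_Icc_self hx)
  linarith [abs_sub_abs_le_abs_sub (u' x) (u' ξ)]

/-- If `u` is twice continuously differentiable on `[a, b]` (with first
derivative `u'` and second derivative `u''` on `[a, b]`, `u''` continuous), then for every
`x ∈ (a, b)` one has `|u'(x)| ≤ ∫_a^b |u''| + (18/(b-a)²) ∫_a^b |u|`. -/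
theorem deriv_pointwise_bound (a b : ℝ) (hab : a < b) (u u' u'' : ℝ → ℝ)
    (hu' : ∀ x ∈ Set.Icc a b, HasDerivWithinAt u (u' x) (Set.Icc a b) x)
    (hu'' : ∀ x ∈ Set.Icc a b, HasDerivWithinAt u' (u'' x) (Set.Icc a b) x)
    (hcont : ContinuousOn u'' (Set.Icc a b)) :
    ∀ x ∈ Set.Ioo a b,
      |u' x| ≤ (∫ t in Set.Ioo a b, |u'' t|) +
        18 / (b - a) ^ 2 * ∫ t in Set.Ioo a b, |u t| :=
  deriv_pointwise_bound_general a b u u' u'' hu' hu'' hcont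
end

section
/- Let a < b be real numbers, let 1 ≤ p < ∞, and let u : [a, b] → ℝ be twice continuously differentiable on [a, b]. Then ‖u′‖_{L^p(a,b)} ≤ (b−a) · ‖u″‖_{L^p(a,b)} + 18 · (b−a)^{−1} · ‖u‖_{L^p(a,b)}. -/
/-!
Let `c` and `d` minimise `|u|` on the outer thirds of `[a, b]`. The mean value theorem on `[c, d]`
gives a point `ξ` with `|u' ξ| ≤ 9 (b - a)⁻² ‖u‖_{L¹}`, and the fundamental theorem of calculus for
`u'` turns this into the uniform bound `‖u'‖_∞ ≤ ‖u''‖_{L¹} + 9 (b - a)⁻² ‖u‖_{L¹}`. Integrating it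
and applying Hölder's inequality `‖v‖_{L¹} ≤ (b - a)^(1 - 1/p) ‖v‖_{L^p}` to `u''` and `u` gives the
estimate, even with `9` in place of `18`.
-/

open MeasureTheory Set

section FiniteMeasure

variable {α : Type*} [MeasurableSpace α] {μ : Measure α} [IsFiniteMeasure μ] {p : ℝ} {f : α → ℝ}

theorem integral_abs_le_of_memLp (hp : 1 ≤ p) (hf : MemLp f (ENNReal.ofReal p) μ) :
    ∫ x, |f x| ∂μ ≤ (∫ x, |f x| ^ p ∂μ) ^ (1 / p) * μ.real univ ^ (1 - 1 / p) := by
  rcases hp.eq_or_lt with rfl | hp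
  · simp
  have hpq := Real.HolderConjugate.conjExponent hp
  have holder := integral_mul_le_Lp_mul_Lq_of_nonneg hpq
    (ae_of_all μ fun x => abs_nonneg (f x)) (ae_of_all μ fun _ => zero_le_one) hf.abs
    (memLp_const (1 : ℝ))
  simpa [hpq.one_sub_inv] using holder

theorem rpow_integral_rpow_abs_le (hp : 0 < p) {M : ℝ} (hM : 0 ≤ M)
    (hf : ∀ᵐ x ∂μ, |f x| ≤ M) :
    (∫ x, |f x| ^ p ∂μ) ^ (1 / p) ≤ M * μ.real univ ^ (1 / p) := by
  have hint : ∫ x, |f x| ^ p ∂μ ≤ μ.real univ * M ^ p := by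
    rw [← smul_eq_mul, ← integral_const]
    refine integral_mono_of_nonneg (ae_of_all μ fun x => by positivity) (integrable_const _) ?_
    filter_upwards [hf] with x hx using Real.rpow_le_rpow (abs_nonneg _) hx hp.le
  calc (∫ x, |f x| ^ p ∂μ) ^ (1 / p) ≤ (μ.real univ * M ^ p) ^ (1 / p) := by gcongr
    _ = M * μ.real univ ^ (1 / p) := by
      rw [Real.mul_rpow measureReal_nonneg (by positivity), ← Real.rpow_mul hM,
        mul_one_div_cancel hp.ne', Real.rpow_one, mul_comm]

end FiniteMeasure

section Interval

variable {a b : ℝ}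

theorem ContinuousOn.memLp_Ioo {f : ℝ → ℝ} (hf : ContinuousOn f (Icc a b)) (q : ENNReal) :
    MemLp f q (volume.restrict (Ioo a b)) := by
  obtain ⟨C, hC⟩ := isCompact_Icc.exists_bound_of_continuousOn hf
  refine MemLp.of_bound ((hf.mono Ioo_subset_Icc_self).aestronglyMeasurable measurableSet_Ioo) C ?_
  filter_upwards [ae_restrict_mem measurableSet_Ioo] with x hx using hC x (Ioo_subset_Icc_self hx)

theorem setIntegral_Ioo_abs_mul_rpow_le {p : ℝ} {f : ℝ → ℝ} (hab : a ≤ b) (hp : 1 ≤ p)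
    (hf : ContinuousOn f (Icc a b)) :
    (∫ t in Ioo a b, |f t|) * (b - a) ^ (1 / p) ≤
      (b - a) * (∫ t in Ioo a b, |f t| ^ p) ^ (1 / p) := by
  have holder := integral_abs_le_of_memLp hp (hf.memLp_Ioo (ENNReal.ofReal p))
  rw [measureReal_restrict_apply_univ, Real.volume_real_Ioo_of_le hab] at holder
  calc (∫ t in Ioo a b, |f t|) * (b - a) ^ (1 / p)
      ≤ (∫ t in Ioo a b, |f t| ^ p) ^ (1 / p) * (b - a) ^ (1 - 1 / p) * (b - a) ^ (1 / p) := by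
        gcongr
    _ = (b - a) * (∫ t in Ioo a b, |f t| ^ p) ^ (1 / p) := by
      rw [mul_assoc, ← Real.rpow_add' (sub_nonneg.2 hab) (by simp), sub_add_cancel,
        Real.rpow_one, mul_comm]

theorem exists_mul_le_setIntegral_Ioo {g : ℝ → ℝ} (hab : a ≤ b) (hg : ContinuousOn g (Icc a b)) :
    ∃ c ∈ Icc a b, (b - a) * g c ≤ ∫ t in Ioo a b, g t := by
  obtain ⟨c, hc, hmin⟩ := isCompact_Icc.exists_isMinOn (nonempty_Icc.2 hab) hg
  refine ⟨c, hc, ?_⟩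
  calc (b - a) * g c = ∫ _ in Ioo a b, g c := by simp [hab]
    _ ≤ ∫ t in Ioo a b, g t :=
      setIntegral_mono_on (integrableOn_const (by simp))
        (hg.integrableOn_Icc.mono_set Ioo_subset_Icc_self) measurableSet_Ioo
        fun x hx => hmin (Ioo_subset_Icc_self hx)

theorem setIntegral_Ioo_add_setIntegral_Ioo_le {g : ℝ → ℝ} {s t : ℝ} (hs : a ≤ s) (hst : s ≤ t)
    (ht : t ≤ b) (hg : IntegrableOn g (Ioo a b)) (hg0 : 0 ≤ g) :
    (∫ x in Ioo a s, g x) + ∫ x in Ioo t b, g x ≤ ∫ x in Ioo a b, g x := by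
  have has : Ioo a s ⊆ Ioo a b := Ioo_subset_Ioo le_rfl (hst.trans ht)
  have htb : Ioo t b ⊆ Ioo a b := Ioo_subset_Ioo (hs.trans hst) le_rfl
  have hdisj : Disjoint (Ioo a s) (Ioo t b) :=
    disjoint_left.2 fun x hx hx' => (hx.2.trans_le hst).not_gt hx'.1
  rw [← setIntegral_union hdisj measurableSet_Ioo (hg.mono_set has) (hg.mono_set htb)]
  exact setIntegral_mono_set hg (ae_of_all _ hg0) (union_subset has htb).eventuallyLE

theorem abs_sub_le_setIntegral_abs_of_hasDerivWithinAt {f f' : ℝ → ℝ}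
    (hf : ∀ x ∈ Icc a b, HasDerivWithinAt f (f' x) (Icc a b) x) (hf' : ContinuousOn f' (Icc a b))
    {x y : ℝ} (hx : x ∈ Icc a b) (hy : y ∈ Icc a b) :
    |f y - f x| ≤ ∫ t in Ioo a b, |f' t| := by
  wlog hxy : x ≤ y generalizing x y
  · rw [abs_sub_comm]
    exact this hy hx (le_of_not_ge hxy)
  have hsub : Icc x y ⊆ Icc a b := Icc_subset_Icc hx.1 hy.2
  have hftc : ∫ t in x..y, f' t = f y - f x :=
    intervalIntegral.integral_eq_sub_of_hasDerivAt_of_le hxy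
      (fun t ht => (hf t (hsub ht)).continuousWithinAt.mono hsub)
      (fun t ht => (hf t (hsub (Ioo_subset_Icc_self ht))).hasDerivAt
        (Icc_mem_nhds (hx.1.trans_lt ht.1) (ht.2.trans_le hy.2)))
      ((hf'.mono (uIcc_of_le hxy ▸ hsub)).intervalIntegrable)
  rw [← hftc]
  calc |∫ t in x..y, f' t| ≤ ∫ t in x..y, |f' t| :=
        intervalIntegral.abs_integral_le_integral_abs hxy
    _ = ∫ t in Ioo x y, |f' t| := by
      rw [intervalIntegral.integral_of_le hxy, integral_Ioc_eq_integral_Ioo]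
    _ ≤ ∫ t in Ioo a b, |f' t| :=
      setIntegral_mono_set (hf'.abs.integrableOn_Icc.mono_set Ioo_subset_Icc_self)
        (ae_of_all _ fun _ => abs_nonneg _) (Ioo_subset_Ioo hx.1 hy.2).eventuallyLE

theorem exists_abs_deriv_le_setIntegral_abs {u u' : ℝ → ℝ} (hab : a < b)
    (hu : ∀ x ∈ Icc a b, HasDerivWithinAt u (u' x) (Icc a b) x) :
    ∃ ξ ∈ Icc a b, |u' ξ| ≤ 9 / (b - a) ^ 2 * ∫ t in Ioo a b, |u t| := by
  have huc : ContinuousOn u (Icc a b) := fun x hx => (hu x hx).continuousWithinAt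
  set h := (b - a) / 3 with hh
  have hh0 : 0 < h := div_pos (sub_pos.2 hab) three_pos
  obtain ⟨c, hc, hc_int⟩ := exists_mul_le_setIntegral_Ioo (show a ≤ a + h by linarith)
    (huc.mono (Icc_subset_Icc le_rfl (by linarith))).abs
  obtain ⟨d, hd, hd_int⟩ := exists_mul_le_setIntegral_Ioo (show b - h ≤ b by linarith)
    (huc.mono (Icc_subset_Icc (by linarith) le_rfl)).abs
  rw [add_sub_cancel_left] at hc_int
  rw [sub_sub_cancel] at hd_int
  have hcd : c < d := by linarith [hc.2, hd.1]
  obtain ⟨ξ, hξ, hslope⟩ := exists_hasDerivAt_eq_slope u u' hcd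
    (huc.mono (Icc_subset_Icc hc.1 hd.2)) fun x hx =>
      (hu x ⟨hc.1.trans hx.1.le, hx.2.le.trans hd.2⟩).hasDerivAt
        (Icc_mem_nhds (hc.1.trans_lt hx.1) (hx.2.trans_le hd.2))
  refine ⟨ξ, ⟨hc.1.trans hξ.1.le, hξ.2.le.trans hd.2⟩, ?_⟩
  have hends := setIntegral_Ioo_add_setIntegral_Ioo_le (g := fun t => |u t|)
    (show a ≤ a + h by linarith) (show a + h ≤ b - h by linarith) (show b - h ≤ b by linarith)
    (huc.abs.integrableOn_Icc.mono_set Ioo_subset_Icc_self) fun _ => abs_nonneg _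
  have hmvt : h * |u' ξ| ≤ |u c| + |u d| :=
    calc h * |u' ξ| ≤ (d - c) * |u' ξ| := by gcongr; linarith [hc.2, hd.1]
      _ = |u d - u c| := by
        rw [hslope, abs_div, abs_of_pos (sub_pos.2 hcd), mul_div_cancel₀ _ (sub_pos.2 hcd).ne']
      _ ≤ |u c| + |u d| := (abs_sub _ _).trans_eq (add_comm _ _)
  rw [show 9 / (b - a) ^ 2 = 1 / h ^ 2 by rw [hh]; field_simp; norm_num, one_div_mul_eq_div,
    le_div_iff₀ (by positivity)]
  calc |u' ξ| * h ^ 2 = h * (h * |u' ξ|) := by ring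
    _ ≤ h * |u c| + h * |u d| := by rw [← mul_add]; gcongr
    _ ≤ ∫ t in Ioo a b, |u t| := by linarith

theorem abs_deriv_le_of_hasDerivWithinAt {u u' u'' : ℝ → ℝ} (hab : a < b)
    (hu' : ∀ x ∈ Icc a b, HasDerivWithinAt u (u' x) (Icc a b) x)
    (hu'' : ∀ x ∈ Icc a b, HasDerivWithinAt u' (u'' x) (Icc a b) x)
    (hcont : ContinuousOn u'' (Icc a b)) {x : ℝ} (hx : x ∈ Icc a b) :
    |u' x| ≤ (∫ t in Ioo a b, |u'' t|) + 9 / (b - a) ^ 2 * ∫ t in Ioo a b, |u t| := by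
  obtain ⟨ξ, hξ, hξ_le⟩ := exists_abs_deriv_le_setIntegral_abs hab hu'
  have := abs_sub_le_setIntegral_abs_of_hasDerivWithinAt hu'' hcont hξ hx
  linarith [abs_sub_abs_le_abs_sub (u' x) (u' ξ)]

end Interval

/-- If `u` is twice continuously differentiable on `[a, b]` and `1 ≤ p < ∞`,
then `‖u'‖_{L^p(a,b)} ≤ (b-a) ‖u''‖_{L^p(a,b)} + 18 (b-a)⁻¹ ‖u‖_{L^p(a,b)}`, where
`‖v‖_{L^p(a,b)} = (∫_a^b |v|^p)^{1/p}`. -/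
theorem deriv_Lp_bound (a b : ℝ) (hab : a < b) (p : ℝ) (hp : 1 ≤ p) (u u' u'' : ℝ → ℝ)
    (hu' : ∀ x ∈ Set.Icc a b, HasDerivWithinAt u (u' x) (Set.Icc a b) x)
    (hu'' : ∀ x ∈ Set.Icc a b, HasDerivWithinAt u' (u'' x) (Set.Icc a b) x)
    (hcont : ContinuousOn u'' (Set.Icc a b)) :
    (∫ t in Set.Ioo a b, |u' t| ^ p) ^ (1 / p) ≤
      (b - a) * (∫ t in Set.Ioo a b, |u'' t| ^ p) ^ (1 / p) +
        18 * (b - a)⁻¹ * (∫ t in Set.Ioo a b, |u t| ^ p) ^ (1 / p) := by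
  have huc : ContinuousOn u (Icc a b) := fun x hx => (hu' x hx).continuousWithinAt
  have hbound := fun x (hx : x ∈ Icc a b) => abs_deriv_le_of_hasDerivWithinAt hab hu' hu'' hcont hx
  set A := (∫ t in Ioo a b, |u'' t|) + 9 / (b - a) ^ 2 * ∫ t in Ioo a b, |u t|
  have hsup : (∫ t in Ioo a b, |u' t| ^ p) ^ (1 / p) ≤ A * (b - a) ^ (1 / p) := by
    have := rpow_integral_rpow_abs_le (μ := volume.restrict (Ioo a b)) (f := u') (by linarith)
      ((abs_nonneg _).trans (hbound a (left_mem_Icc.2 hab.le)))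
      ((ae_restrict_mem measurableSet_Ioo).mono fun x hx => hbound x (Ioo_subset_Icc_self hx))
    rwa [measureReal_restrict_apply_univ, Real.volume_real_Ioo_of_le hab.le] at this
  have hu''_holder := setIntegral_Ioo_abs_mul_rpow_le hab.le hp hcont
  have hu_holder := setIntegral_Ioo_abs_mul_rpow_le hab.le hp huc
  calc (∫ t in Ioo a b, |u' t| ^ p) ^ (1 / p) ≤ A * (b - a) ^ (1 / p) := hsup
    _ = (∫ t in Ioo a b, |u'' t|) * (b - a) ^ (1 / p) +
          9 / (b - a) ^ 2 * ((∫ t in Ioo a b, |u t|) * (b - a) ^ (1 / p)) := by ring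
    _ ≤ (b - a) * (∫ t in Ioo a b, |u'' t| ^ p) ^ (1 / p) +
          9 / (b - a) ^ 2 * ((b - a) * (∫ t in Ioo a b, |u t| ^ p) ^ (1 / p)) := by gcongr
    _ = (b - a) * (∫ t in Ioo a b, |u'' t| ^ p) ^ (1 / p) +
          9 * (b - a)⁻¹ * (∫ t in Ioo a b, |u t| ^ p) ^ (1 / p) := by
      field_simp [(sub_pos.2 hab).ne']
    _ ≤ _ := by gcongr; norm_num
end

section
/- Let n ≥ 1, let 1 ≤ p < ∞, let i ∈ {1, …, n}, and let u : ℝⁿ → ℝ be twice continuously differentiable with compact support. Then for every ε > 0, ‖∂_i u‖_{L^p(ℝⁿ)} ≤ ε · ‖∂_i² u‖_{L^p(ℝⁿ)} + 36 · ε^{−1} · ‖u‖_{L^p(ℝⁿ)}, where ∂_i u and ∂_i² u denote the first and second partial derivatives of u in the i-th coordinate direction. -/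
open MeasureTheory Set

/-- The partial derivative of `u : ℝⁿ → ℝ` in the `i`-th coordinate direction. -/
noncomputable def partialDeriv' {n : ℕ} (i : Fin n) (u : EuclideanSpace ℝ (Fin n) → ℝ) :
    EuclideanSpace ℝ (Fin n) → ℝ :=
  fun x => fderiv ℝ u x (EuclideanSpace.single i 1)

/-!
Restrict `u` to the line `s ↦ x + s e`. By Taylor's formula on `[0, ε]`,
`ε u'(0) = u(ε) - u(0) - ∫₀^ε (u'(s) - u'(0)) ds`, and `|u'(s) - u'(0)| ≤ ∫₀^ε |u''|`, so
`|∂ₑu(x)| ≤ ε⁻¹ |u(x + εe)| + ε⁻¹ |u(x)| + ∫₀^ε |∂ₑ²u(x + re)| dr`.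
Taking `Lᵖ` norms in `x`, the first two terms are controlled by translation invariance of Lebesgue
measure, and the last one by Hölder's inequality in `r` followed by Tonelli and translation
invariance again. This gives the inequality with constant `2 ≤ 36`.
-/

open scoped ENNReal

section Calculus

variable {E F : Type*} [NormedAddCommGroup E] [NormedSpace ℝ E]
  [NormedAddCommGroup F] [NormedSpace ℝ F]

theorem Differentiable.hasDerivAt_comp_add_smul {f : E → F} (hf : Differentiable ℝ f)
    (x e : E) (t : ℝ) :
    HasDerivAt (fun s : ℝ => f (x + s • e)) (fderiv ℝ f (x + t • e) e) t := by
  have hline : HasDerivAt (fun s : ℝ => x + s • e) e t := by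
    simpa using ((hasDerivAt_id t).smul_const e).const_add x
  exact (hf _).hasFDerivAt.comp_hasDerivAt t hline

theorem ContDiff.fderiv_apply_const {f : E → F} {n : WithTop ℕ∞} (hf : ContDiff ℝ (n + 1) f)
    (e : E) : ContDiff ℝ n (fderiv ℝ f · e) :=
  (hf.fderiv_right le_rfl).clm_apply contDiff_const

variable [CompleteSpace F]

theorem norm_sub_deriv_zero_le_integral {g' g'' : ℝ → F}
    (hg' : ∀ t, HasDerivAt g' (g'' t) t) (hg'' : Continuous g'') {ε s : ℝ} (hs : s ∈ Icc 0 ε) :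
    ‖g' s - g' 0‖ ≤ ∫ r in (0 : ℝ)..ε, ‖g'' r‖ := by
  rw [← intervalIntegral.integral_eq_sub_of_hasDerivAt (fun t _ => hg' t)
    (hg''.intervalIntegrable 0 s)]
  calc ‖∫ r in (0 : ℝ)..s, g'' r‖ ≤ ∫ r in (0 : ℝ)..s, ‖g'' r‖ :=
        intervalIntegral.norm_integral_le_integral_norm hs.1
    _ ≤ ∫ r in (0 : ℝ)..ε, ‖g'' r‖ :=
        intervalIntegral.integral_mono_interval le_rfl hs.1 hs.2
          (Filter.Eventually.of_forall fun _ => norm_nonneg _) (hg''.norm.intervalIntegrable 0 ε)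

theorem norm_deriv_zero_le {g g' g'' : ℝ → F} (hg : ∀ t, HasDerivAt g (g' t) t)
    (hg' : ∀ t, HasDerivAt g' (g'' t) t) (hg'' : Continuous g'') {ε : ℝ} (hε : 0 < ε) :
    ‖g' 0‖ ≤ ε⁻¹ * ‖g ε‖ + ε⁻¹ * ‖g 0‖ + ∫ r in (0 : ℝ)..ε, ‖g'' r‖ := by
  have hg'c : Continuous g' := continuous_iff_continuousAt.2 fun t => (hg' t).continuousAt
  have htaylor : ε • g' 0 = (g ε - g 0) - ∫ s in (0 : ℝ)..ε, (g' s - g' 0) := by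
    rw [intervalIntegral.integral_sub (hg'c.intervalIntegrable 0 ε) intervalIntegrable_const,
      intervalIntegral.integral_eq_sub_of_hasDerivAt (fun t _ => hg t)
        (hg'c.intervalIntegrable 0 ε), intervalIntegral.integral_const]
    simp
  have hrem : ‖∫ s in (0 : ℝ)..ε, (g' s - g' 0)‖ ≤ (∫ r in (0 : ℝ)..ε, ‖g'' r‖) * |ε - 0| :=
    intervalIntegral.norm_integral_le_of_norm_le_const fun s hs =>
      norm_sub_deriv_zero_le_integral hg' hg'' (Ioc_subset_Icc_self (by simpa [hε.le] using hs))
  rw [sub_zero, abs_of_pos hε] at hrem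
  have hbound : ε * ‖g' 0‖ ≤ ‖g ε‖ + ‖g 0‖ + ε * ∫ r in (0 : ℝ)..ε, ‖g'' r‖ :=
    calc ε * ‖g' 0‖ = ‖ε • g' 0‖ := by rw [norm_smul, Real.norm_of_nonneg hε.le]
      _ ≤ ‖g ε - g 0‖ + ‖∫ s in (0 : ℝ)..ε, (g' s - g' 0)‖ := htaylor ▸ norm_sub_le _ _
      _ ≤ _ := by linarith [norm_sub_le (g ε) (g 0)]
  rw [← mul_le_mul_iff_of_pos_left hε]
  calc ε * ‖g' 0‖ ≤ ‖g ε‖ + ‖g 0‖ + ε * ∫ r in (0 : ℝ)..ε, ‖g'' r‖ := hbound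
    _ = _ := by field_simp

theorem norm_fderiv_apply_le {u : E → F} (hu : ContDiff ℝ 2 u) (x e : E) {ε : ℝ} (hε : 0 < ε) :
    ‖fderiv ℝ u x e‖ ≤ ε⁻¹ * ‖u (x + ε • e)‖ + ε⁻¹ * ‖u x‖ +
      ∫ r in (0 : ℝ)..ε, ‖fderiv ℝ (fderiv ℝ u · e) (x + r • e) e‖ := by
  have hv : ContDiff ℝ 1 (fderiv ℝ u · e) := hu.fderiv_apply_const e
  have hw : Continuous (fderiv ℝ (fderiv ℝ u · e) · e) :=
    (hv.fderiv_apply_const (n := 0) e).continuous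
  simpa using norm_deriv_zero_le
    (fun t => (hu.differentiable two_ne_zero).hasDerivAt_comp_add_smul x e t)
    (fun t => (hv.differentiable one_ne_zero).hasDerivAt_comp_add_smul x e t)
    (hw.comp (continuous_const.add (continuous_id.smul continuous_const))) hε

end Calculus

theorem rpow_lintegral_le_measure_univ_mul_lintegral_rpow {β : Type*} [MeasurableSpace β]
    {ν : Measure β} {f : β → ℝ≥0∞} (hf : AEMeasurable f ν) {p : ℝ} (hp : 1 ≤ p) :
    (∫⁻ r, f r ∂ν) ^ p ≤ ν univ ^ (p - 1) * ∫⁻ r, f r ^ p ∂ν := by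
  have hp0 : 0 < p := by linarith
  have hholder := eLpNorm_le_eLpNorm_mul_rpow_measure_univ (μ := ν)
    (ENNReal.one_le_ofReal.2 hp) hf.aestronglyMeasurable
  rw [eLpNorm_one_eq_lintegral_enorm, eLpNorm_eq_lintegral_rpow_enorm_toReal
    (by simpa using hp0) ENNReal.ofReal_ne_top, ENNReal.toReal_ofReal hp0.le] at hholder
  simp only [enorm_eq_self, ENNReal.toReal_one, div_one] at hholder
  calc (∫⁻ r, f r ∂ν) ^ p
      ≤ ((∫⁻ r, f r ^ p ∂ν) ^ (1 / p) * ν univ ^ (1 - 1 / p)) ^ p :=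
        ENNReal.rpow_le_rpow hholder hp0.le
    _ = ν univ ^ (p - 1) * ∫⁻ r, f r ^ p ∂ν := by
        rw [ENNReal.mul_rpow_of_nonneg _ _ hp0.le, ← ENNReal.rpow_mul, ← ENNReal.rpow_mul,
          one_div_mul_cancel hp0.ne', ENNReal.rpow_one, mul_comm]
        congr 2
        field_simp

section Translation

variable {E : Type*} [NormedAddCommGroup E] [NormedSpace ℝ E] [MeasurableSpace E] [BorelSpace E]
  [SecondCountableTopology E] {μ : Measure E} [SFinite μ] [μ.IsAddRightInvariant]

theorem lintegral_rpow_setLIntegral_translate_le {f : E → ℝ≥0∞} (hf : Measurable f) (e : E)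
    {ε p : ℝ} (hε : 0 < ε) (hp : 1 ≤ p) :
    ∫⁻ x, (∫⁻ r in Ioc (0 : ℝ) ε, f (x + r • e)) ^ p ∂μ ≤
      ENNReal.ofReal ε ^ p * ∫⁻ x, f x ^ p ∂μ := by
  have hF : Measurable fun z : E × ℝ => f (z.1 + z.2 • e) ^ p :=
    (hf.comp (measurable_fst.add (measurable_snd.smul_const e))).pow_const p
  have hvol : volume.restrict (Ioc 0 ε) univ = ENNReal.ofReal ε := by simp
  have hpow : ENNReal.ofReal ε ^ (p - 1) * ENNReal.ofReal ε = ENNReal.ofReal ε ^ p := by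
    simpa using (ENNReal.rpow_add (p - 1) 1 (by simpa using hε) ENNReal.ofReal_ne_top).symm
  calc ∫⁻ x, (∫⁻ r in Ioc (0 : ℝ) ε, f (x + r • e)) ^ p ∂μ
      ≤ ∫⁻ x, ENNReal.ofReal ε ^ (p - 1) * (∫⁻ r in Ioc (0 : ℝ) ε, f (x + r • e) ^ p) ∂μ := by
        refine lintegral_mono fun x => ?_
        rw [← hvol]
        exact rpow_lintegral_le_measure_univ_mul_lintegral_rpow
          (hf.comp (measurable_const.add (measurable_id.smul_const e))).aemeasurable hp
    _ = ENNReal.ofReal ε ^ (p - 1) * ∫⁻ r in Ioc (0 : ℝ) ε, (∫⁻ x, f (x + r • e) ^ p ∂μ) := by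
        rw [lintegral_const_mul _ hF.lintegral_prod_right',
          lintegral_lintegral_swap hF.aemeasurable]
    _ = ENNReal.ofReal ε ^ p * ∫⁻ x, f x ^ p ∂μ := by
        simp_rw [lintegral_add_right_eq_self (fun y => f y ^ p)]
        rw [setLIntegral_const, Real.volume_Ioc, sub_zero, mul_comm _ (ENNReal.ofReal ε),
          ← mul_assoc, hpow]

theorem eLpNorm_intervalIntegral_norm_translate_le {F : Type*} [NormedAddCommGroup F]
    {w : E → F} (hw : StronglyMeasurable w) (e : E) {ε : ℝ} (hε : 0 < ε) {p : ℝ≥0∞}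
    (hp : 1 ≤ p) (hp_top : p ≠ ∞) :
    eLpNorm (fun x => ∫ r in (0 : ℝ)..ε, ‖w (x + r • e)‖) p μ ≤
      ENNReal.ofReal ε * eLpNorm w p μ := by
  have hp0 : p ≠ 0 := (zero_lt_one.trans_le hp).ne'
  have hp_real : 1 ≤ p.toReal := by simpa using ENNReal.toReal_mono hp_top hp
  have hpt : ∀ x, ‖∫ r in (0 : ℝ)..ε, ‖w (x + r • e)‖‖ₑ ≤
      ∫⁻ r in Ioc (0 : ℝ) ε, ‖w (x + r • e)‖ₑ := fun x => by
    rw [intervalIntegral.integral_of_le hε.le]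
    simpa using enorm_integral_le_lintegral_enorm (μ := volume.restrict (Ioc 0 ε))
      fun r => ‖w (x + r • e)‖
  refine (eLpNorm_mono_enorm (g := fun x => ∫⁻ r in Ioc (0 : ℝ) ε, ‖w (x + r • e)‖ₑ) hpt).trans ?_
  rw [eLpNorm_eq_lintegral_rpow_enorm_toReal hp0 hp_top,
    eLpNorm_eq_lintegral_rpow_enorm_toReal hp0 hp_top]
  simp only [enorm_eq_self]
  calc (∫⁻ x, (∫⁻ r in Ioc (0 : ℝ) ε, ‖w (x + r • e)‖ₑ) ^ p.toReal ∂μ) ^ (1 / p.toReal)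
      ≤ (ENNReal.ofReal ε ^ p.toReal * ∫⁻ x, ‖w x‖ₑ ^ p.toReal ∂μ) ^ (1 / p.toReal) :=
        ENNReal.rpow_le_rpow
          (lintegral_rpow_setLIntegral_translate_le hw.enorm e hε hp_real) (by positivity)
    _ = _ := by
        rw [ENNReal.mul_rpow_of_nonneg _ _ (by positivity), ← ENNReal.rpow_mul,
          mul_one_div_cancel (by positivity), ENNReal.rpow_one]

theorem eLpNorm_fderiv_apply_le {F : Type*} [NormedAddCommGroup F] [NormedSpace ℝ F]
    [CompleteSpace F] {u : E → F} (hu : ContDiff ℝ 2 u) (e : E) {ε : ℝ} (hε : 0 < ε)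
    {p : ℝ≥0∞} (hp : 1 ≤ p) (hp_top : p ≠ ∞) :
    eLpNorm (fderiv ℝ u · e) p μ ≤
      ENNReal.ofReal ε * eLpNorm (fderiv ℝ (fderiv ℝ u · e) · e) p μ +
        ENNReal.ofReal (2 / ε) * eLpNorm u p μ := by
  set w := fun x => fderiv ℝ (fderiv ℝ u · e) x e
  have hwc : Continuous w := ((hu.fderiv_apply_const e).fderiv_apply_const (n := 0) e).continuous
  have huc : Continuous u := hu.continuous
  set G₁ := fun x => ε⁻¹ * ‖u (x + ε • e)‖
  set G₂ := fun x => ε⁻¹ * ‖u x‖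
  set G₃ := fun x => ∫ r in (0 : ℝ)..ε, ‖w (x + r • e)‖
  have hG₁ : Continuous G₁ := by fun_prop
  have hG₂ : Continuous G₂ := by fun_prop
  have hG₃ : Continuous G₃ :=
    intervalIntegral.continuous_parametric_intervalIntegral_of_continuous' (by fun_prop) _ _
  have hconst : ENNReal.ofReal ε⁻¹ = ‖ε⁻¹‖ₑ := (Real.enorm_of_nonneg (by positivity)).symm
  calc eLpNorm (fderiv ℝ u · e) p μ ≤ eLpNorm (G₁ + G₂ + G₃) p μ :=
        eLpNorm_mono_real fun x => norm_fderiv_apply_le hu x e hε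
    _ ≤ eLpNorm G₁ p μ + eLpNorm G₂ p μ + eLpNorm G₃ p μ :=
        (eLpNorm_add_le (hG₁.add hG₂).aestronglyMeasurable hG₃.aestronglyMeasurable hp).trans
          (add_le_add_left (eLpNorm_add_le hG₁.aestronglyMeasurable hG₂.aestronglyMeasurable hp) _)
    _ ≤ ENNReal.ofReal ε⁻¹ * eLpNorm u p μ + ENNReal.ofReal ε⁻¹ * eLpNorm u p μ +
          ENNReal.ofReal ε * eLpNorm w p μ := by
        gcongr
        · rw [hconst, ← eLpNorm_comp_measurePreserving huc.aestronglyMeasurable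
            (measurePreserving_add_right μ (ε • e)), ← eLpNorm_norm (u ∘ _), ← eLpNorm_const_smul]
          rfl
        · rw [hconst, ← eLpNorm_norm u, ← eLpNorm_const_smul]
          rfl
        · exact eLpNorm_intervalIntegral_norm_translate_le hwc.stronglyMeasurable e hε hp hp_top
    _ = _ := by
        rw [div_eq_mul_inv, ENNReal.ofReal_mul zero_le_two, ENNReal.ofReal_ofNat]
        ring

end Translation

theorem MeasureTheory.MemLp.eLpNorm_ofReal_eq {α : Type*} [MeasurableSpace α] {ν : Measure α}
    {f : α → ℝ} {p : ℝ} (hp : 0 < p) (hf : MemLp f (ENNReal.ofReal p) ν) :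
    eLpNorm f (ENNReal.ofReal p) ν = ENNReal.ofReal ((∫ x, |f x| ^ p ∂ν) ^ (1 / p)) := by
  rw [hf.eLpNorm_eq_integral_rpow_norm (by simpa using hp) ENNReal.ofReal_ne_top,
    ENNReal.toReal_ofReal hp.le]
  simp [Real.norm_eq_abs, one_div]

theorem partial_deriv_Lp_interpolation_general (n : ℕ) (p : ℝ) (hp : 1 ≤ p) (i : Fin n)
    (u : EuclideanSpace ℝ (Fin n) → ℝ) (hu : ContDiff ℝ 2 u) (hsupp : HasCompactSupport u) :
    ∀ ε : ℝ, 0 < ε →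
      (∫ x, |partialDeriv' i u x| ^ p) ^ (1 / p) ≤
        ε * (∫ x, |partialDeriv' i (partialDeriv' i u) x| ^ p) ^ (1 / p) +
          36 * ε⁻¹ * (∫ x, |u x| ^ p) ^ (1 / p) := by
  intro ε hε
  have hp0 : 0 < p := by linarith
  have hv : ContDiff ℝ 1 (partialDeriv' i u) := hu.fderiv_apply_const _
  have hv_supp : HasCompactSupport (partialDeriv' i u) := hsupp.fderiv_apply ℝ _
  have hmem {f : EuclideanSpace ℝ (Fin n) → ℝ} (hf : Continuous f) (hfs : HasCompactSupport f) :
      MemLp f (.ofReal p) volume :=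
    hf.memLp_of_hasCompactSupport hfs
  have hw_mem : MemLp (partialDeriv' i (partialDeriv' i u)) (.ofReal p) volume :=
    hmem (hv.fderiv_apply_const (n := 0) _).continuous (hv_supp.fderiv_apply ℝ _)
  have key : eLpNorm (partialDeriv' i u) (.ofReal p) volume ≤
      .ofReal ε * eLpNorm (partialDeriv' i (partialDeriv' i u)) (.ofReal p) volume +
        .ofReal (2 / ε) * eLpNorm u (.ofReal p) volume :=
    eLpNorm_fderiv_apply_le hu _ hε (ENNReal.one_le_ofReal.2 hp) ENNReal.ofReal_ne_top
  rw [(hmem hv.continuous hv_supp).eLpNorm_ofReal_eq hp0, hw_mem.eLpNorm_ofReal_eq hp0,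
    (hmem hu.continuous hsupp).eLpNorm_ofReal_eq hp0, ← ENNReal.ofReal_mul hε.le,
    ← ENNReal.ofReal_mul (by positivity), ← ENNReal.ofReal_add (by positivity) (by positivity),
    ENNReal.ofReal_le_ofReal_iff (by positivity)] at key
  refine key.trans ?_
  gcongr
  rw [div_eq_mul_inv]
  linarith [inv_pos.2 hε]

/-- Let `n ≥ 1`, `1 ≤ p < ∞`, `i ∈ {1, …, n}` and let `u : ℝⁿ → ℝ` be twice
continuously differentiable with compact support. Then for every `ε > 0`,
`‖∂ᵢu‖_{L^p(ℝⁿ)} ≤ ε ‖∂ᵢ²u‖_{L^p(ℝⁿ)} + 36 ε⁻¹ ‖u‖_{L^p(ℝⁿ)}`. -/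
theorem partial_deriv_Lp_interpolation (n : ℕ) (hn : 1 ≤ n) (p : ℝ) (hp : 1 ≤ p) (i : Fin n)
    (u : EuclideanSpace ℝ (Fin n) → ℝ) (hu : ContDiff ℝ 2 u) (hsupp : HasCompactSupport u) :
    ∀ ε : ℝ, 0 < ε →
      (∫ x, |partialDeriv' i u x| ^ p) ^ (1 / p) ≤
        ε * (∫ x, |partialDeriv' i (partialDeriv' i u) x| ^ p) ^ (1 / p) +
          36 * ε⁻¹ * (∫ x, |u x| ^ p) ^ (1 / p) :=
  partial_deriv_Lp_interpolation_general n p hp i u hu hsupp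
end

section
/- Let Ω ⊂ ℝⁿ be a bounded measurable set, let α > 1 with conjugate exponent α′ = α/(α−1), let w ∈ L^α(Ω) be a positive weight, and let p : Ω → [1, ∞) be a measurable exponent satisfying 1 ≤ p⁻ ≤ p(x) ≤ p⁺ < ∞ for almost every x ∈ Ω. Then for every f ∈ L^{α′ p⁺}(Ω), ‖f‖_{L^{p(·)}_w(Ω)} ≤ max( 1, (1 + |Ω|) · ‖w‖_{L^α(Ω)} ) · ‖f‖_{L^{α′ p⁺}(Ω)}. In particular, L^q(Ω) embeds continuously into L^{p(·)}_w(Ω) for every q ≥ α′ p⁺. -/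
open MeasureTheory Set ENNReal

/-- The weighted Luxemburg norm
`‖f‖_{L^{p(·)}_w(Ω)} = inf {λ > 0 : ∫_Ω |f/λ|^{p(x)} w dx ≤ 1}`
(with the infimum of the empty set equal to `+∞`). -/
noncomputable def weightedLuxemburgNorm {n : ℕ} (Ω : Set (EuclideanSpace ℝ (Fin n)))
    (p w f : EuclideanSpace ℝ (Fin n) → ℝ) : ℝ≥0∞ :=
  sInf (ENNReal.ofReal ''
    {l : ℝ | 0 < l ∧ (∫⁻ x in Ω, ENNReal.ofReal (|f x / l| ^ p x * w x)) ≤ 1})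

/-!
Put `M = max(1, (1 + |Ω|)‖w‖_α)`, `q = α' p⁺` and let `λ > M ‖f‖_q`, so that `g = M f / λ` has
`∫ |g|^q ≤ 1`. Since `M ≥ 1` and `p ≥ 1`, `ρ_w(f/λ) = ∫ |g/M|^p w ≤ M⁻¹ ∫ |g|^p w`, and Hölder's
inequality with the pair `(α', α)` bounds the last integral by `‖|g|^p‖_{α'} ‖w‖_α`.
As `0 ≤ p α' ≤ q`, pointwise `|g|^{p α'} ≤ 1 + |g|^q`, whence `∫ |g|^{p α'} ≤ |Ω| + 1` and
`‖|g|^p‖_{α'} ≤ 1 + |Ω|`. Altogether `ρ_w(f/λ) ≤ M⁻¹ (1 + |Ω|) ‖w‖_α ≤ 1`.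
-/

theorem weightedLuxemburgNorm_le_of_forall_lt {n : ℕ} {Ω : Set (EuclideanSpace ℝ (Fin n))}
    {p w f : EuclideanSpace ℝ (Fin n) → ℝ} {B : ℝ≥0∞}
    (h : ∀ l : ℝ, 0 < l → B < ENNReal.ofReal l →
      ∫⁻ x in Ω, ENNReal.ofReal (|f x / l| ^ p x * w x) ≤ 1) :
    weightedLuxemburgNorm Ω p w f ≤ B := by
  refine le_of_forall_gt fun c hBc => ?_
  obtain ⟨l, -, hBl, hlc⟩ := ENNReal.lt_iff_exists_real_btwn.1 hBc
  have hl : 0 < l := ENNReal.ofReal_pos.1 (zero_le.trans_lt hBl)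
  calc weightedLuxemburgNorm Ω p w f ≤ ENNReal.ofReal l := sInf_le ⟨l, ⟨hl, h l hl hBl⟩, rfl⟩
    _ < c := hlc

namespace ENNReal

theorem rpow_le_one_add_rpow {x : ℝ≥0∞} {r q : ℝ} (hr : 0 ≤ r) (hrq : r ≤ q) :
    x ^ r ≤ 1 + x ^ q := by
  rcases le_total x 1 with hx | hx
  · exact (rpow_le_one hx hr).trans le_self_add
  · exact (rpow_le_rpow_of_exponent_le hx hrq).trans le_add_self

theorem ofReal_rpow_le_ofReal_rpow {x r : ℝ} (hr : 0 < r) :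
    ENNReal.ofReal x ^ r ≤ ENNReal.ofReal (x ^ r) := by
  rcases le_total 0 x with hx | hx
  · exact (ofReal_rpow_of_nonneg hx hr.le).le
  · rw [ofReal_of_nonpos hx, zero_rpow_of_pos hr]
    exact zero_le

theorem ofReal_abs_div_rpow_mul {a b l r : ℝ} (hl : 0 < l) (hr : 0 ≤ r) :
    ENNReal.ofReal (|a / l| ^ r * b) = ((ENNReal.ofReal l)⁻¹ * ENNReal.ofReal |a|) ^ r *
      ENNReal.ofReal b := by
  rw [ofReal_mul (by positivity), ← ofReal_rpow_of_nonneg (abs_nonneg _) hr, abs_div,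
    abs_of_pos hl, ofReal_div_of_pos hl, div_eq_mul_inv, mul_comm (ENNReal.ofReal |a|)]

end ENNReal

section

variable {X : Type*} [MeasurableSpace X] {μ : Measure X}

theorem lintegral_rpow_le_measure_univ_add {G : X → ℝ≥0∞} {r : X → ℝ} {q : ℝ}
    (hr : ∀ᵐ x ∂μ, 0 ≤ r x ∧ r x ≤ q) :
    ∫⁻ x, G x ^ r x ∂μ ≤ μ univ + ∫⁻ x, G x ^ q ∂μ :=
  calc ∫⁻ x, G x ^ r x ∂μ ≤ ∫⁻ x, (1 + G x ^ q) ∂μ :=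
        lintegral_mono_ae (hr.mono fun x hx => ENNReal.rpow_le_one_add_rpow hx.1 hx.2)
    _ = μ univ + ∫⁻ x, G x ^ q ∂μ := by rw [lintegral_add_left measurable_const, lintegral_one]

theorem lintegral_const_mul_rpow_le_one {F : X → ℝ≥0∞} (hF : AEMeasurable F μ) {q : ℝ}
    (hq : 0 < q) {a : ℝ≥0∞} (ha : a * (∫⁻ x, F x ^ q ∂μ) ^ (1 / q) ≤ 1) :
    ∫⁻ x, (a * F x) ^ q ∂μ ≤ 1 :=
  calc ∫⁻ x, (a * F x) ^ q ∂μ = (a * (∫⁻ x, F x ^ q ∂μ) ^ (1 / q)) ^ q := by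
        simp_rw [mul_rpow_of_nonneg _ _ hq.le, lintegral_const_mul'' _ (hF.pow_const q), one_div,
          rpow_inv_rpow hq.ne']
    _ ≤ 1 := rpow_le_one ha hq.le

theorem lintegral_inv_mul_rpow_mul_le {M : ℝ≥0∞} (hM : 1 ≤ M) {p : X → ℝ}
    (hp : ∀ᵐ x ∂μ, 1 ≤ p x) (G W : X → ℝ≥0∞) :
    ∫⁻ x, (M⁻¹ * G x) ^ p x * W x ∂μ ≤ M⁻¹ * ∫⁻ x, G x ^ p x * W x ∂μ := by
  rw [← lintegral_const_mul' _ _ (inv_ne_top.2 (one_pos.trans_le hM).ne')]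
  refine lintegral_mono_ae (hp.mono fun x hx => ?_)
  rw [mul_rpow_of_nonneg _ _ (zero_le_one.trans hx), mul_assoc]
  gcongr
  exact rpow_le_self_of_le_one (ENNReal.inv_le_one.2 hM) hx

theorem lintegral_rpow_mul_le_of_holderConjugate {α α' q : ℝ} (hαα' : α.HolderConjugate α')
    {p : X → ℝ} (hp : ∀ᵐ x ∂μ, 0 ≤ p x ∧ p x * α' ≤ q) {G W : X → ℝ≥0∞}
    (hGp : AEMeasurable (fun x => G x ^ p x) μ) (hW : AEMeasurable W μ)
    (hG : ∫⁻ x, G x ^ q ∂μ ≤ 1) :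
    ∫⁻ x, G x ^ p x * W x ∂μ ≤ (1 + μ univ) * (∫⁻ x, W x ^ α ∂μ) ^ (1 / α) := by
  have hα'1 : 1 < α' := hαα'.symm.lt
  have hGpα' : ∫⁻ x, (G x ^ p x) ^ α' ∂μ ≤ μ univ + 1 := by
    simp_rw [← rpow_mul]
    exact (lintegral_rpow_le_measure_univ_add
      (hp.mono fun x hx => ⟨by nlinarith, hx.2⟩)).trans (by gcongr)
  have hGp_norm : (∫⁻ x, (G x ^ p x) ^ α' ∂μ) ^ (1 / α') ≤ 1 + μ univ :=
    calc (∫⁻ x, (G x ^ p x) ^ α' ∂μ) ^ (1 / α') ≤ (μ univ + 1) ^ (1 / α') :=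
          rpow_le_rpow hGpα' (by positivity)
      _ ≤ (μ univ + 1) ^ (1 : ℝ) :=
          rpow_le_rpow_of_exponent_le le_add_self ((div_le_one (by linarith)).2 hα'1.le)
      _ = 1 + μ univ := by rw [rpow_one, add_comm]
  calc ∫⁻ x, G x ^ p x * W x ∂μ
      ≤ (∫⁻ x, (G x ^ p x) ^ α' ∂μ) ^ (1 / α') * (∫⁻ x, W x ^ α ∂μ) ^ (1 / α) :=
        lintegral_mul_le_Lp_mul_Lq μ hαα'.symm hGp hW
    _ ≤ (1 + μ univ) * (∫⁻ x, W x ^ α ∂μ) ^ (1 / α) := by gcongr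

theorem lintegral_ofReal_abs_div_rpow_mul_le_one {α α' P : ℝ} (hαα' : α.HolderConjugate α')
    (hP : 0 < P) {p f w : X → ℝ} (hpm : Measurable p) (hfm : Measurable f) (hwm : Measurable w)
    (hp : ∀ᵐ x ∂μ, 1 ≤ p x ∧ p x ≤ P) {M : ℝ≥0∞} (hM1 : 1 ≤ M) (hMtop : M ≠ ⊤)
    (hM : (1 + μ univ) * (∫⁻ x, ENNReal.ofReal (w x ^ α) ∂μ) ^ (1 / α) ≤ M) {l : ℝ} (hl : 0 < l)
    (hMl : M * (∫⁻ x, ENNReal.ofReal (|f x| ^ (α' * P)) ∂μ) ^ (1 / (α' * P)) <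
      ENNReal.ofReal l) :
    ∫⁻ x, ENNReal.ofReal (|f x / l| ^ p x * w x) ∂μ ≤ 1 := by
  have hα' : 0 < α' := hαα'.symm.pos
  have hq : 0 < α' * P := mul_pos hα' hP
  have hM0 : M ≠ 0 := (one_pos.trans_le hM1).ne'
  set G : X → ℝ≥0∞ := fun x => M * (ENNReal.ofReal l)⁻¹ * ENNReal.ofReal |f x|
  have hG : ∫⁻ x, G x ^ (α' * P) ∂μ ≤ 1 := by
    refine lintegral_const_mul_rpow_le_one hfm.abs.ennreal_ofReal.aemeasurable hq ?_
    simp_rw [ofReal_rpow_of_nonneg (abs_nonneg _) hq.le]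
    calc M * (ENNReal.ofReal l)⁻¹ * (∫⁻ x, ENNReal.ofReal (|f x| ^ (α' * P)) ∂μ) ^ (1 / (α' * P))
        = M * (∫⁻ x, ENNReal.ofReal (|f x| ^ (α' * P)) ∂μ) ^ (1 / (α' * P)) *
          (ENNReal.ofReal l)⁻¹ := mul_right_comm _ _ _
      _ ≤ ENNReal.ofReal l * (ENNReal.ofReal l)⁻¹ := by gcongr
      _ ≤ 1 := ENNReal.mul_inv_le_one _
  have hW : (∫⁻ x, ENNReal.ofReal (w x) ^ α ∂μ) ^ (1 / α) ≤
      (∫⁻ x, ENNReal.ofReal (w x ^ α) ∂μ) ^ (1 / α) :=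
    rpow_le_rpow (lintegral_mono fun x => ENNReal.ofReal_rpow_le_ofReal_rpow hαα'.pos)
      (one_div_nonneg.2 hαα'.nonneg)
  have hHolder : ∫⁻ x, G x ^ p x * ENNReal.ofReal (w x) ∂μ ≤
      (1 + μ univ) * (∫⁻ x, ENNReal.ofReal (w x) ^ α ∂μ) ^ (1 / α) :=
    lintegral_rpow_mul_le_of_holderConjugate hαα'
      (hp.mono fun x hx => ⟨zero_le_one.trans hx.1, by nlinarith [hx.2]⟩)
      ((measurable_const.mul hfm.abs.ennreal_ofReal).pow hpm).aemeasurable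
      hwm.ennreal_ofReal.aemeasurable hG
  calc ∫⁻ x, ENNReal.ofReal (|f x / l| ^ p x * w x) ∂μ
      = ∫⁻ x, (M⁻¹ * G x) ^ p x * ENNReal.ofReal (w x) ∂μ := by
        refine lintegral_congr_ae (hp.mono fun x hx => ?_)
        dsimp only [G]
        rw [ENNReal.ofReal_abs_div_rpow_mul hl (zero_le_one.trans hx.1), mul_assoc M,
          ENNReal.inv_mul_cancel_left hM0 hMtop]
    _ ≤ M⁻¹ * ∫⁻ x, G x ^ p x * ENNReal.ofReal (w x) ∂μ :=
        lintegral_inv_mul_rpow_mul_le hM1 (hp.mono fun x hx => hx.1) _ _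
    _ ≤ M⁻¹ * M := by grw [hHolder, hW, hM]
    _ ≤ 1 := ENNReal.inv_mul_le_one M

end

theorem Lq_embeds_weighted_variable_Lebesgue_general (n : ℕ) (Ω : Set (EuclideanSpace ℝ (Fin n)))
    (hΩb : Bornology.IsBounded Ω)
    (α α' : ℝ) (hα : 1 < α) (hα' : α' = α / (α - 1))
    (w : EuclideanSpace ℝ (Fin n) → ℝ) (hwm : Measurable w)
    (hwα : (∫⁻ x in Ω, ENNReal.ofReal (w x ^ α)) < ⊤)
    (p : EuclideanSpace ℝ (Fin n) → ℝ) (hpm : Measurable p)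
    (pMinus pPlus : ℝ)
    (hpm1 : 1 ≤ pMinus)
    (hae : ∀ᵐ x ∂(volume.restrict Ω), pMinus ≤ p x ∧ p x ≤ pPlus) :
    ∀ f : EuclideanSpace ℝ (Fin n) → ℝ, Measurable f →
      (∫⁻ x in Ω, ENNReal.ofReal (|f x| ^ (α' * pPlus))) < ⊤ →
      weightedLuxemburgNorm Ω p w f ≤
        max 1 ((1 + volume Ω) * (∫⁻ x in Ω, ENNReal.ofReal (w x ^ α)) ^ (1 / α)) *
          (∫⁻ x in Ω, ENNReal.ofReal (|f x| ^ (α' * pPlus))) ^ (1 / (α' * pPlus)) := by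
  intro f hfm _
  have hαα' : α.HolderConjugate α' := (Real.holderConjugate_iff_eq_conjExponent hα).2 hα'
  have hMtop : max 1 ((1 + volume Ω) * (∫⁻ x in Ω, ENNReal.ofReal (w x ^ α)) ^ (1 / α)) ≠ ⊤ :=
    max_ne_top one_ne_top (mul_ne_top (add_ne_top.2 ⟨one_ne_top, hΩb.measure_lt_top.ne⟩)
      (rpow_ne_top_of_nonneg (by positivity) hwα.ne))
  refine weightedLuxemburgNorm_le_of_forall_lt fun l hl hMl => ?_
  rcases eq_or_ne (volume.restrict Ω) 0 with hΩ0 | hΩ0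
  · simp [hΩ0]
  have hp : ∀ᵐ x ∂(volume.restrict Ω), 1 ≤ p x ∧ p x ≤ pPlus :=
    hae.mono fun x hx => ⟨hpm1.trans hx.1, hx.2⟩
  have hP : 0 < pPlus := by
    have := ae_neBot.2 hΩ0
    obtain ⟨x, hx1, hx2⟩ := hp.exists
    linarith
  refine lintegral_ofReal_abs_div_rpow_mul_le_one hαα' hP hpm hfm hwm hp (le_max_left _ _) hMtop
    ?_ hl hMl
  rw [Measure.restrict_apply_univ]
  exact le_max_right _ _

/-- Let `Ω ⊂ ℝⁿ` be bounded measurable, `α > 1` with conjugate `α'`,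
`w ∈ L^α(Ω)` a positive weight, and `p : Ω → [1,∞)` measurable with
`1 ≤ p⁻ ≤ p(x) ≤ p⁺ < ∞` a.e. Then for every `f ∈ L^{α'p⁺}(Ω)`,
`‖f‖_{L^{p(·)}_w(Ω)} ≤ max(1, (1+|Ω|)‖w‖_{L^α(Ω)}) ‖f‖_{L^{α'p⁺}(Ω)}`; in particular `L^q(Ω)`
embeds continuously into `L^{p(·)}_w(Ω)` for every `q ≥ α'p⁺`. -/
theorem Lq_embeds_weighted_variable_Lebesgue (n : ℕ) (Ω : Set (EuclideanSpace ℝ (Fin n)))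
    (hΩm : MeasurableSet Ω) (hΩb : Bornology.IsBounded Ω)
    (α α' : ℝ) (hα : 1 < α) (hα' : α' = α / (α - 1))
    (w : EuclideanSpace ℝ (Fin n) → ℝ) (hw0 : ∀ x ∈ Ω, 0 < w x) (hwm : Measurable w)
    (hwα : (∫⁻ x in Ω, ENNReal.ofReal (w x ^ α)) < ⊤)
    (p : EuclideanSpace ℝ (Fin n) → ℝ) (hpm : Measurable p)
    (pMinus pPlus : ℝ)
    (hpMinus : pMinus = essInf p (volume.restrict Ω))
    (hpPlus : pPlus = essSup p (volume.restrict Ω))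
    (hpm1 : 1 ≤ pMinus)
    (hae : ∀ᵐ x ∂(volume.restrict Ω), pMinus ≤ p x ∧ p x ≤ pPlus) :
    ∀ f : EuclideanSpace ℝ (Fin n) → ℝ, Measurable f →
      (∫⁻ x in Ω, ENNReal.ofReal (|f x| ^ (α' * pPlus))) < ⊤ →
      weightedLuxemburgNorm Ω p w f ≤
        max 1 ((1 + volume Ω) * (∫⁻ x in Ω, ENNReal.ofReal (w x ^ α)) ^ (1 / α)) *
          (∫⁻ x in Ω, ENNReal.ofReal (|f x| ^ (α' * pPlus))) ^ (1 / (α' * pPlus)) :=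
  Lq_embeds_weighted_variable_Lebesgue_general n Ω hΩb α α' hα hα' w hwm hwα p hpm pMinus pPlus hpm1
    hae
end
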